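/- arXiv:1508.02998 — 9 statements merged into one kernel-verified Lean document; each statement's English description precedes it below -/
import Mathlib

section
/- Let G be an inverse semigroup, M a unital C*-algebra, β an admissible G-action on M, and u a unitary β-cocycle. Then for every g ∈ G one has u_{g g⁻¹} = β_{g g⁻¹}(1), hence u_g* u_g = u_g u_g* = β_{g g⁻¹}(1) (so each u_g is a partial isometry whose range and source projections coincide), and moreover β_g(u_{g⁻¹}) = u_g*. -/
/-- For an inverse semigroup `G`, a unital C*-algebra `M`, an admissible
`G`-action `β` on `M` and a unitary `β`-cocycle `u`, one has
`u (g g⁻¹) = β (g g⁻¹) 1`, `u g * u g* = u g* * u g = β (g g⁻¹) 1` and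
`β g (u g⁻¹) = (u g)*` for every `g`. -/
theorem stmt2 {G : Type*} [Semigroup G] {M : Type*} [CStarAlgebra M]
    (inv : G → G)
    (hinv1 : ∀ g, g * inv g * g = g)
    (hinv2 : ∀ g, inv g * g * inv g = inv g)
    (hinv_unique : ∀ g i, g * i * g = g → i * g * i = i → i = inv g)
    (β : G → M →⋆ₙₐ[ℂ] M)
    (hβ : ∀ g h, β (g * h) = (β g).comp (β h))
    (hadm : ∀ g : G, ∀ x y : M, β (g * inv g) x * y = x * β (g * inv g) y)
    (u : G → M)
    (hu1 : ∀ g, star (u g) * u g = β (g * inv g) 1)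
    (hu2 : ∀ g, u g * star (u g) = u (g * inv g))
    (hu3 : ∀ g h, u (g * h) = u g * β g (u h)) :
    ∀ g : G, u (g * inv g) = β (g * inv g) 1 ∧
      star (u g) * u g = β (g * inv g) 1 ∧
      u g * star (u g) = β (g * inv g) 1 ∧
      β g (u (inv g)) = star (u g) := by
  intro g
  have hee : (g * inv g) * (g * inv g) = g * inv g := by
    rw [mul_assoc, ← mul_assoc (inv g), hinv2]
  have hie : inv (g * inv g) = g * inv g :=
    (hinv_unique (g * inv g) (g * inv g) (by rw [hee, hee]) (by rw [hee, hee])).symm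
  have hsa : star (u (g * inv g)) = u (g * inv g) := by
    rw [← hu2 g, star_mul, star_star]
  have h2 : u (g * inv g) * u (g * inv g) = u (g * inv g) := by
    have h := hu2 (g * inv g)
    rwa [hsa, hie, hee] at h
  have h3 : u (g * inv g) * u (g * inv g) = β (g * inv g) 1 := by
    have h := hu1 (g * inv g)
    rwa [hsa, hie, hee] at h
  have h1 : u (g * inv g) = β (g * inv g) 1 := by rw [← h2, h3]
  have heg : (g * inv g) * g = g := hinv1 g
  have hβeg : β (g * inv g) (u g) = u g := by
    calc β (g * inv g) (u g) = β (g * inv g) 1 * β (g * inv g) (u g) := by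
          rw [← map_mul, one_mul]
      _ = u (g * inv g) * β (g * inv g) (u g) := by rw [h1]
      _ = u ((g * inv g) * g) := (hu3 (g * inv g) g).symm
      _ = u g := by rw [heg]
  have hmul : u g * β g (u (inv g)) = β (g * inv g) 1 := by
    rw [← hu3 g (inv g)]; exact h1
  have hstar : star (u g) * u g = β (g * inv g) 1 := hu1 g
  have hβev : β (g * inv g) (β g (u (inv g))) = β g (u (inv g)) := by
    have h := DFunLike.congr_fun (hβ (g * inv g) g) (u (inv g))
    rw [heg] at h
    exact h.symm
  have hv : β (g * inv g) 1 * β g (u (inv g)) = β g (u (inv g)) := by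
    rw [hadm g 1 (β g (u (inv g))), one_mul, hβev]
  have hfinal : β g (u (inv g)) = star (u g) := by
    have hb1u : β (g * inv g) 1 * u g = u g := by
      rw [hadm g 1 (u g), one_mul, hβeg]
    have hsb1 : star (β (g * inv g) 1) = β (g * inv g) 1 := by
      rw [← map_star, star_one]
    calc β g (u (inv g)) = β (g * inv g) 1 * β g (u (inv g)) := hv.symm
      _ = (star (u g) * u g) * β g (u (inv g)) := by rw [hstar]
      _ = star (u g) * (u g * β g (u (inv g))) := by rw [mul_assoc]
      _ = star (u g) * β (g * inv g) 1 := by rw [hmul]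
      _ = star (β (g * inv g) 1 * u g) := by rw [star_mul, hsb1]
      _ = star (u g) := by rw [hb1u]
  exact ⟨h1, hstar, by rw [hu2 g, h1], hfinal⟩
end

section
/- Let G be an inverse semigroup, M a unital C*-algebra with admissible G-action β, and B ⊆ M a β-invariant closed two-sided ideal. Let u, v, w be unitary β-cocycles, let V₁, V₂ ∈ M be isometries with V₁ V₁* + V₂ V₂* = 1 and β_g(V_i) = V_i β_g(1) for all g ∈ G and i = 1, 2, and let T ∈ M be a unitary such that w_g β_g(T) − T (V₁ u_g V₁* + V₂ v_g V₂*) ∈ B for all g ∈ G. Then w_g β_g(T V₁ V₁* T*) w_g* − β_{g g⁻¹}(T V₁ V₁* T*) ∈ B for all g ∈ G. -/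
/-- If `u, v, w` are unitary `β`-cocycles, `V₁, V₂` are `β`-invariant isometries
with `V₁ V₁* + V₂ V₂* = 1`, and `T` is a unitary with
`w_g β_g(T) − T (V₁ u_g V₁* + V₂ v_g V₂*) ∈ B` for all `g`, then
`w_g β_g(T V₁ V₁* T*) w_g* − β_{g g⁻¹}(T V₁ V₁* T*) ∈ B` for all `g`. -/
theorem stmt5 {G M : Type*} [Semigroup G] [CStarAlgebra M]
    (inv : G → G)
    (hinv1 : ∀ g, g * inv g * g = g)
    (hinv2 : ∀ g, inv g * g * inv g = inv g)
    (hinv_unique : ∀ g i, g * i * g = g → i * g * i = i → i = inv g)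
    (β : G → M →⋆ₙₐ[ℂ] M)
    (hβ : ∀ g h, β (g * h) = (β g).comp (β h))
    (hadm : ∀ g : G, ∀ x y : M, β (g * inv g) x * y = x * β (g * inv g) y)
    (B : TwoSidedIdeal M)
    (hBclosed : IsClosed (B : Set M))
    (hBstar : ∀ x ∈ B, star x ∈ B)
    (hBinv : ∀ g : G, ∀ x ∈ B, β g x ∈ B)
    (u v w : G → M)
    (hu1 : ∀ g, star (u g) * u g = β (g * inv g) 1)
    (hu2 : ∀ g, u g * star (u g) = u (g * inv g))
    (hu3 : ∀ g h, u (g * h) = u g * β g (u h))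
    (hv1 : ∀ g, star (v g) * v g = β (g * inv g) 1)
    (hv2 : ∀ g, v g * star (v g) = v (g * inv g))
    (hv3 : ∀ g h, v (g * h) = v g * β g (v h))
    (hw1 : ∀ g, star (w g) * w g = β (g * inv g) 1)
    (hw2 : ∀ g, w g * star (w g) = w (g * inv g))
    (hw3 : ∀ g h, w (g * h) = w g * β g (w h))
    (V₁ V₂ : M)
    (hV₁ : star V₁ * V₁ = 1) (hV₂ : star V₂ * V₂ = 1)
    (hVsum : V₁ * star V₁ + V₂ * star V₂ = 1)
    (hV₁inv : ∀ g : G, β g V₁ = V₁ * β g 1)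
    (hV₂inv : ∀ g : G, β g V₂ = V₂ * β g 1)
    (T : M) (hT1 : T * star T = 1) (hT2 : star T * T = 1)
    (hTw : ∀ g : G, w g * β g T - T * (V₁ * u g * star V₁ + V₂ * v g * star V₂) ∈ B) :
    ∀ g : G,
      w g * β g (T * V₁ * star V₁ * star T) * star (w g)
        - β (g * inv g) (T * V₁ * star V₁ * star T) ∈ B := by
  intro g
  set e := g * inv g with he_def
  have hee : e * e = e := by
    show g * inv g * (g * inv g) = g * inv g
    rw [← mul_assoc, hinv1]
  have hinve : inv e = e := (hinv_unique e e (by rw [hee, hee]) (by rw [hee, hee])).symm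
  have hβe1 : β e 1 * β e 1 = β e 1 := by rw [← map_mul, one_mul]
  have hβe1s : star (β e 1) = β e 1 := by rw [← map_star, star_one]
  have hβg1 : β g 1 * β g 1 = β g 1 := by rw [← map_mul, one_mul]
  have hβg1s : star (β g 1) = β g 1 := by rw [← map_star, star_one]
  -- any cocycle takes value β e 1 at the idempotent e
  have zfact : ∀ z : G → M, (∀ k, star (z k) * z k = β (k * inv k) 1) →
      (∀ k, z k * star (z k) = z (k * inv k)) → z e = β e 1 := by
    intro z hz1 hz2
    have h1 : z e * star (z e) = z e := by rw [hz2 e, hinve, hee]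
    have h2 : star (z e) = z e := by
      conv_lhs => rw [← h1]
      rw [star_mul, star_star, h1]
    have h3 := hz1 e
    rw [hinve, hee, h2] at h3
    rw [h2] at h1
    exact h1.symm.trans h3
  have hue := zfact u hu1 hu2
  have hve := zfact v hv1 hv2
  have hwe := zfact w hw1 hw2
  -- u g absorbs β g 1 on the right
  have hgf : g * (inv g * g) = g := by rw [← mul_assoc, hinv1]
  have hug0 : u g = u g * β g (u (inv g * g)) := by
    conv_lhs => rw [← hgf, hu3]
  have hug : u g * β g 1 = u g := by
    conv_lhs => rw [hug0]
    rw [mul_assoc, ← map_mul, mul_one, ← hug0]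
  -- orthogonality of the isometries
  have hV21 : star V₂ * V₁ = 0 := by
    have h0 : star V₂ * V₁ * star V₁ + star V₂ = star V₂ := by
      have h := congrArg (fun x => star V₂ * x) hVsum
      simpa [mul_add, ← mul_assoc, hV₂] using h
    have h1 : star V₂ * V₁ * star V₁ = 0 := add_eq_right.mp h0
    calc star V₂ * V₁ = star V₂ * V₁ * (star V₁ * V₁) := by rw [hV₁, mul_one]
      _ = star V₂ * V₁ * star V₁ * V₁ := by rw [← mul_assoc]
      _ = 0 := by rw [h1, zero_mul]
  have hV12 : star V₁ * V₂ = 0 := by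
    have h := congrArg star hV21
    simpa [star_mul, star_star] using h
  -- right-associated helper lemmas
  have la : ∀ x : M, star V₁ * (V₁ * x) = x := fun x => by rw [← mul_assoc, hV₁, one_mul]
  have lb : ∀ x : M, star V₂ * (V₂ * x) = x := fun x => by rw [← mul_assoc, hV₂, one_mul]
  have lc : ∀ x : M, star V₂ * (V₁ * x) = 0 := fun x => by rw [← mul_assoc, hV21, zero_mul]
  have ld : ∀ x : M, star V₁ * (V₂ * x) = 0 := fun x => by rw [← mul_assoc, hV12, zero_mul]
  have lu : ∀ x : M, u g * (β g 1 * x) = u g * x := fun x => by rw [← mul_assoc, hug]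
  have luu : ∀ x : M, u g * (star (u g) * x) = β e 1 * x := fun x => by
    rw [← mul_assoc, hu2, ← he_def, hue]
  -- the key stability lemma
  have key : ∀ a b q : M, a - b ∈ B → a * q * star a - b * q * star b ∈ B := by
    intro a b q hab
    have h1 : (a - b) * (q * star a) ∈ B := B.mul_mem_right _ _ hab
    have h2 : (b * q) * (star a - star b) ∈ B := B.mul_mem_left _ _ (by
      have h := hBstar _ hab
      rwa [star_sub] at h)
    have h3 := B.add_mem h1 h2
    convert h3 using 1
    noncomm_ring
  -- membership facts
  have m1 : w g * β g T - T * (V₁ * u g * star V₁ + V₂ * v g * star V₂) ∈ B := hTw g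
  have m2 : β e T - T * β e 1 ∈ B := by
    have h := hTw e
    rw [hue, hve, hwe, ← map_mul, one_mul] at h
    have hsum : T * (V₁ * β e 1 * star V₁ + V₂ * β e 1 * star V₂) = T * β e 1 := by
      congr 1
      have h1 : β e (V₁ * star V₁) = V₁ * β e 1 * star V₁ := by
        conv_lhs => rw [map_mul, hV₁inv, map_star, hV₁inv, star_mul, hβe1s,
          mul_assoc V₁, ← mul_assoc ((β e) 1), hβe1, ← mul_assoc]
      have h2 : β e (V₂ * star V₂) = V₂ * β e 1 * star V₂ := by
        conv_lhs => rw [map_mul, hV₂inv, map_star, hV₂inv, star_mul, hβe1s,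
          mul_assoc V₂, ← mul_assoc ((β e) 1), hβe1, ← mul_assoc]
      rw [← h1, ← h2, ← map_add, hVsum]
    rwa [hsum] at h
  have mem1 := key (w g * β g T) (T * (V₁ * u g * star V₁ + V₂ * v g * star V₂))
    (V₁ * β g 1 * star V₁) m1
  have mem2 := key (β e T) (T * β e 1) (V₁ * β e 1 * star V₁) m2
  -- algebraic identities
  have c1 : w g * β g (T * V₁ * star V₁ * star T) * star (w g)
      = w g * β g T * (V₁ * β g 1 * star V₁) * star (w g * β g T) := by
    simp only [map_mul, map_star, hV₁inv, star_mul, hβg1s, star_star, mul_assoc]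
    rw [← mul_assoc (β g 1) (β g 1), hβg1]
  have c2 : T * (V₁ * u g * star V₁ + V₂ * v g * star V₂) * (V₁ * β g 1 * star V₁)
      * star (T * (V₁ * u g * star V₁ + V₂ * v g * star V₂))
      = T * (V₁ * β e 1 * star V₁) * star T := by
    simp only [star_add, star_mul, star_star, mul_add, add_mul, mul_assoc,
      la, lb, lc, ld, lu, luu, mul_zero, zero_mul, add_zero, zero_add]
  have c3 : β e (T * V₁ * star V₁ * star T)
      = β e T * (V₁ * β e 1 * star V₁) * star (β e T) := by
    simp only [map_mul, map_star, hV₁inv, star_mul, hβe1s, star_star, mul_assoc]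
    rw [← mul_assoc (β e 1) (β e 1), hβe1]
  have c4 : T * β e 1 * (V₁ * β e 1 * star V₁) * star (T * β e 1)
      = T * (V₁ * β e 1 * star V₁) * star T := by
    have hcomm : β e 1 * V₁ = V₁ * β e 1 := by
      have := hadm g 1 V₁
      rw [← he_def, one_mul, hV₁inv] at this
      exact this
    have hcomm' : β e 1 * star V₁ = star V₁ * β e 1 := by
      have h := congrArg star hcomm
      simp only [star_mul, star_star, hβe1s] at h
      exact h.symm
    simp only [star_mul, hβe1s, mul_assoc]
    rw [← mul_assoc (β e 1) V₁, hcomm, mul_assoc V₁ (β e 1)]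
    rw [← mul_assoc (β e 1) (β e 1), hβe1]
    rw [← mul_assoc (β e 1) (star V₁), hcomm', mul_assoc (star V₁) (β e 1),
      ← mul_assoc (β e 1) (β e 1), hβe1]
    rw [← mul_assoc (β e 1) (star V₁), hcomm', mul_assoc]
  -- assemble
  have final := B.sub_mem mem1 mem2
  rw [c2, c4] at final
  rw [c1, c3]
  convert final using 1
  abel
end

section
/- Let G be an inverse semigroup, M a unital C*-algebra with admissible G-action β, and B ⊆ M a β-invariant closed two-sided ideal. Let u and v be unitary β-cocycles and s ∈ M a unitary such that v_g β_g(s) − s u_g ∈ B for all g ∈ G. Then s* v_g − u_g β_g(s*) ∈ B for all g ∈ G. (Consequently, unitary equivalence of twisted G-extensions is a symmetric relation.) -/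
/-- If `u, v` are unitary `β`-cocycles and `s` is a unitary with
`v_g β_g(s) − s u_g ∈ B` for all `g`, then `s* v_g − u_g β_g(s*) ∈ B` for all `g`
(symmetry of unitary equivalence of twisted `G`-extensions). -/
theorem stmt6 {G M : Type*} [Semigroup G] [CStarAlgebra M]
    (inv : G → G)
    (hinv1 : ∀ g, g * inv g * g = g)
    (hinv2 : ∀ g, inv g * g * inv g = inv g)
    (hinv_unique : ∀ g i, g * i * g = g → i * g * i = i → i = inv g)
    (β : G → M →⋆ₙₐ[ℂ] M)
    (hβ : ∀ g h, β (g * h) = (β g).comp (β h))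
    (hadm : ∀ g : G, ∀ x y : M, β (g * inv g) x * y = x * β (g * inv g) y)
    (B : TwoSidedIdeal M)
    (hBclosed : IsClosed (B : Set M))
    (hBstar : ∀ x ∈ B, star x ∈ B)
    (hBinv : ∀ g : G, ∀ x ∈ B, β g x ∈ B)
    (u v : G → M)
    (hu1 : ∀ g, star (u g) * u g = β (g * inv g) 1)
    (hu2 : ∀ g, u g * star (u g) = u (g * inv g))
    (hu3 : ∀ g h, u (g * h) = u g * β g (u h))
    (hv1 : ∀ g, star (v g) * v g = β (g * inv g) 1)
    (hv2 : ∀ g, v g * star (v g) = v (g * inv g))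
    (hv3 : ∀ g h, v (g * h) = v g * β g (v h))
    (s : M) (hs1 : s * star s = 1) (hs2 : star s * s = 1)
    (hsv : ∀ g : G, v g * β g s - s * u g ∈ B) :
    ∀ g : G, star s * v g - u g * β g (star s) ∈ B := by
  intro g
  have key : star s * (v g * β g s - s * u g) * β g (star s) ∈ B :=
    B.mul_mem_right _ _ (B.mul_mem_left _ _ (hsv g))
  have hge : g * (inv g * g) = g := by rw [← mul_assoc, hinv1]
  have h1 : v g = v g * β g (v (inv g * g)) := by rw [← hv3, hge]
  have hvg : v g * β g 1 = v g := by
    conv_lhs => rw [h1]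
    rw [mul_assoc, ← map_mul, mul_one, ← h1]
  have h2 : star s * (v g * β g s - s * u g) * β g (star s)
      = star s * v g - u g * β g (star s) := by
    rw [mul_sub, sub_mul]
    congr 1
    · rw [mul_assoc, mul_assoc, ← map_mul, hs1, hvg]
    · rw [← mul_assoc, hs2, one_mul]
  rwa [h2] at key
end

section
/- Let G be an inverse semigroup, M a unital C*-algebra with admissible G-action β, B ⊆ M a β-invariant closed two-sided ideal, and A a C*-algebra with admissible G-action α. Let π : A → M be a *-homomorphism, v a unitary β-cocycle, and p ∈ M a projection such that v_g β_g(π(a)) v_g* = π(α_g(a)) for all a ∈ A and g ∈ G, and v_g β_g(p) v_g* − β_{g g⁻¹}(p) ∈ B for all g ∈ G. Then v_g β_g(π(a) p) v_g* − π(α_g(a)) p ∈ B for all a ∈ A and g ∈ G; that is, the map a ↦ π(a) p + B from A to M/B intertwines the induced actions modulo B. -/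
/-- If `π : A → M` is a *-homomorphism, `v` a unitary `β`-cocycle and `p` a
projection with `v_g β_g(π(a)) v_g* = π(α_g(a))` and `v_g β_g(p) v_g* − β_{gg⁻¹}(p) ∈ B`,
then `v_g β_g(π(a) p) v_g* − π(α_g(a)) p ∈ B` for all `a, g`; i.e. `a ↦ π(a) p + B`
intertwines the induced actions modulo `B`. -/
theorem stmt7 {G A M : Type*} [Semigroup G] [NonUnitalCStarAlgebra A] [CStarAlgebra M]
    (inv : G → G)
    (hinv1 : ∀ g, g * inv g * g = g)
    (hinv2 : ∀ g, inv g * g * inv g = inv g)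
    (hinv_unique : ∀ g i, g * i * g = g → i * g * i = i → i = inv g)
    (β : G → M →⋆ₙₐ[ℂ] M)
    (hβ : ∀ g h, β (g * h) = (β g).comp (β h))
    (hadmβ : ∀ g : G, ∀ x y : M, β (g * inv g) x * y = x * β (g * inv g) y)
    (α : G → A →⋆ₙₐ[ℂ] A)
    (hα : ∀ g h, α (g * h) = (α g).comp (α h))
    (hadmα : ∀ g : G, ∀ x y : A, α (g * inv g) x * y = x * α (g * inv g) y)
    (B : TwoSidedIdeal M)
    (hBclosed : IsClosed (B : Set M))
    (hBstar : ∀ x ∈ B, star x ∈ B)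
    (hBinv : ∀ g : G, ∀ x ∈ B, β g x ∈ B)
    (π : A →⋆ₙₐ[ℂ] M)
    (v : G → M)
    (hv1 : ∀ g, star (v g) * v g = β (g * inv g) 1)
    (hv2 : ∀ g, v g * star (v g) = v (g * inv g))
    (hv3 : ∀ g h, v (g * h) = v g * β g (v h))
    (p : M) (hp : IsSelfAdjoint p) (hp2 : p * p = p)
    (hπv : ∀ (a : A) (g : G), v g * β g (π a) * star (v g) = π (α g a))
    (hpv : ∀ g : G, v g * β g p * star (v g) - β (g * inv g) p ∈ B) :
    ∀ (a : A) (g : G), v g * β g (π a * p) * star (v g) - π (α g a) * p ∈ B := by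
  intro a g
  set e := g * inv g with he_def
  have heg : e * g = g := hinv1 g
  have hee : e * e = e := by
    calc e * e = (g * inv g * g) * inv g := by simp only [he_def, mul_assoc]
      _ = e := by rw [hinv1 g]
  have hinve : inv e = e :=
    (hinv_unique e e (by rw [hee, hee]) (by rw [hee, hee])).symm
  have hve_sa : star (v e) = v e := by
    rw [he_def, ← hv2 g, star_mul, star_star]
  have hβee : ∀ z : M, β e (β e z) = β e z := by
    intro z
    rw [← NonUnitalStarAlgHom.comp_apply, ← hβ, hee]
  have hβeg : ∀ x : M, β e (β g x) = β g x := by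
    intro x
    rw [← NonUnitalStarAlgHom.comp_apply, ← hβ, heg]
  have hadme : ∀ x y : M, β e x * y = x * β e y := by
    intro x y
    have := hadmβ g x y
    rwa [← he_def] at this
  have hkey : ∀ x : M, β e 1 * β g x = β g x := by
    intro x
    rw [← hβeg x, hadme, one_mul]
    exact hβee _
  have hkey2 : ∀ z : M, β e z * β e 1 = β e z := by
    intro z
    rw [hadme, hβee, ← hadme, mul_one]
  have hve : v e = β e 1 := by
    have h1 : star (v e) * v e = β e 1 := by
      have := hv1 e; rwa [hinve, hee] at this
    have h2 : v e * star (v e) = v e := by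
      have := hv2 e; rwa [hinve, hee] at this
    rw [hve_sa] at h1 h2
    rw [← h1]
    exact h2.symm
  have hβeπ : ∀ b : A, β e (π b) = π (α e b) := by
    intro b
    have h := hπv b e
    rw [hve_sa, hve, mul_assoc, hkey2, hadme, one_mul, hβee] at h
    exact h
  have hfix : β e (π (α g a)) = π (α g a) := by
    have h2 : α e (α g a) = α g a := by
      rw [← NonUnitalStarAlgHom.comp_apply, ← hα, heg]
    rw [hβeπ (α g a), h2]
  have hstep : π (α g a) * β e p = π (α g a) * p := by
    rw [← hadme, hfix]
  have hmain : v g * β g (π a * p) * star (v g)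
      = π (α g a) * (v g * β g p * star (v g)) := by
    rw [← hπv a g, map_mul]
    calc v g * (β g (π a) * β g p) * star (v g)
        = v g * (β g (π a) * (star (v g) * v g) * β g p) * star (v g) := by
          rw [hv1 g, ← he_def, mul_assoc (β g (π a)), hkey p]
      _ = v g * β g (π a) * star (v g) * (v g * β g p * star (v g)) := by
          simp only [mul_assoc]
  rw [hmain, ← hstep, ← mul_sub]
  exact B.mul_mem_left _ _ (hpv g)
end

section
/- Let G be an inverse semigroup with idempotent set E. Then for all g, h ∈ G the following set equality holds: {e ∈ E : e g = e h and e·(g g⁻¹ h h⁻¹) = e} = {e ∈ E : e·(h g⁻¹) = e}. (Hence the inner product ⟨φ_g, φ_h⟩ = ⋁{e ∈ E : e g = e h, e ≤ g g⁻¹ h h⁻¹} on the compatible ℓ²(G)-space equals g g⁻¹ · ⋁{e ∈ E : e = e h g⁻¹}.) -/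
private lemma isg_inv_invol {G : Type*} [Semigroup G] (inv : G → G)
    (hinv1 : ∀ g, g * inv g * g = g)
    (hinv2 : ∀ g, inv g * g * inv g = inv g)
    (hinv_unique : ∀ g i, g * i * g = g → i * g * i = i → i = inv g)
    : ∀ a, inv (inv a) = a := fun a =>
  (hinv_unique (inv a) a (hinv2 a) (hinv1 a)).symm

private lemma isg_idem_inv {G : Type*} [Semigroup G] (inv : G → G)
    (hinv1 : ∀ g, g * inv g * g = g)
    (hinv2 : ∀ g, inv g * g * inv g = inv g)
    (hinv_unique : ∀ g i, g * i * g = g → i * g * i = i → i = inv g)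
    (e : G) (he : e * e = e) : inv e = e :=
  (hinv_unique e e (by rw [he, he]) (by rw [he, he])).symm

private lemma isg_mul_idem {G : Type*} [Semigroup G] (inv : G → G)
    (hinv1 : ∀ g, g * inv g * g = g)
    (hinv2 : ∀ g, inv g * g * inv g = inv g)
    (hinv_unique : ∀ g i, g * i * g = g → i * g * i = i → i = inv g)
    (e f : G) (he : e * e = e) (hf : f * f = f) :
    (e * f) * (e * f) = e * f := by
  set x := inv (e * f) with hxdef
  have h1 : (e * f) * (f * x * e) * (e * f) = e * f := by
    have := hinv1 (e * f)
    calc (e * f) * (f * x * e) * (e * f)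
        = e * (f * f) * x * (e * e) * f := by simp only [mul_assoc]
      _ = (e * f) * x * (e * f) := by rw [he, hf]; simp only [mul_assoc]
      _ = e * f := hinv1 (e * f)
  have h2 : (f * x * e) * (e * f) * (f * x * e) = f * x * e := by
    calc (f * x * e) * (e * f) * (f * x * e)
        = f * (x * ((e * e) * (f * f)) * x) * e := by simp only [mul_assoc]
      _ = f * (x * (e * f) * x) * e := by rw [he, hf]
      _ = f * x * e := by rw [hinv2 (e * f)]
  have hx : f * x * e = x := hinv_unique (e * f) _ h1 h2
  have hxx : x * x = x := by
    calc x * x = (f * x * e) * (f * x * e) := by rw [hx]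
      _ = f * (x * (e * f) * x) * e := by simp only [mul_assoc]
      _ = f * x * e := by rw [hinv2 (e * f)]
      _ = x := hx
  have : e * f = inv x := by rw [hxdef, isg_inv_invol inv hinv1 hinv2 hinv_unique]
  rw [this, isg_idem_inv inv hinv1 hinv2 hinv_unique x hxx, hxx]

private lemma isg_idem_comm {G : Type*} [Semigroup G] (inv : G → G)
    (hinv1 : ∀ g, g * inv g * g = g)
    (hinv2 : ∀ g, inv g * g * inv g = inv g)
    (hinv_unique : ∀ g i, g * i * g = g → i * g * i = i → i = inv g)
    (e f : G) (he : e * e = e) (hf : f * f = f) :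
    e * f = f * e := by
  have hef : (e * f) * (e * f) = e * f := isg_mul_idem inv hinv1 hinv2 hinv_unique e f he hf
  have hfe : (f * e) * (f * e) = f * e := isg_mul_idem inv hinv1 hinv2 hinv_unique f e hf he
  have h1 : (e * f) * (f * e) * (e * f) = e * f := by
    calc (e * f) * (f * e) * (e * f)
        = e * (f * f) * (e * e) * f := by simp only [mul_assoc]
      _ = (e * f) * (e * f) := by rw [he, hf]; simp only [mul_assoc]
      _ = e * f := hef
  have h2 : (f * e) * (e * f) * (f * e) = f * e := by
    calc (f * e) * (e * f) * (f * e)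
        = f * (e * e) * (f * f) * e := by simp only [mul_assoc]
      _ = (f * e) * (f * e) := by rw [he, hf]; simp only [mul_assoc]
      _ = f * e := hfe
  have := hinv_unique (e * f) (f * e) h1 h2
  rw [this, isg_idem_inv inv hinv1 hinv2 hinv_unique (e * f) hef]

private lemma isg_inv_mul_rev {G : Type*} [Semigroup G] (inv : G → G)
    (hinv1 : ∀ g, g * inv g * g = g)
    (hinv2 : ∀ g, inv g * g * inv g = inv g)
    (hinv_unique : ∀ g i, g * i * g = g → i * g * i = i → i = inv g)
    (a b : G) : inv (a * b) = inv b * inv a := by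
  have hia : (inv a * a) * (inv a * a) = inv a * a := by
    calc (inv a * a) * (inv a * a) = (inv a * a * inv a) * a := by simp only [mul_assoc]
      _ = inv a * a := by rw [hinv2]
  have hib : (b * inv b) * (b * inv b) = b * inv b := by
    calc (b * inv b) * (b * inv b) = (b * inv b * b) * inv b := by simp only [mul_assoc]
      _ = b * inv b := by rw [hinv1]
  have hc : (b * inv b) * (inv a * a) = (inv a * a) * (b * inv b) :=
    isg_idem_comm inv hinv1 hinv2 hinv_unique _ _ hib hia
  have h1 : (a * b) * (inv b * inv a) * (a * b) = a * b := by
    calc (a * b) * (inv b * inv a) * (a * b)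
        = a * ((b * inv b) * (inv a * a)) * b := by simp only [mul_assoc]
      _ = a * ((inv a * a) * (b * inv b)) * b := by rw [hc]
      _ = (a * inv a * a) * (b * inv b * b) := by simp only [mul_assoc]
      _ = a * b := by rw [hinv1, hinv1]
  have h2 : (inv b * inv a) * (a * b) * (inv b * inv a) = inv b * inv a := by
    calc (inv b * inv a) * (a * b) * (inv b * inv a)
        = inv b * ((inv a * a) * (b * inv b)) * inv a := by simp only [mul_assoc]
      _ = inv b * ((b * inv b) * (inv a * a)) * inv a := by rw [hc]
      _ = (inv b * b * inv b) * (inv a * a * inv a) := by simp only [mul_assoc]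
      _ = inv b * inv a := by rw [hinv2, hinv2]
  exact (hinv_unique (a * b) (inv b * inv a) h1 h2).symm

/-- If `e` is idempotent and `e * x = e`, then also `e * inv x = e` and `x * e = e`. -/
private lemma isg_le_inv {G : Type*} [Semigroup G] (inv : G → G)
    (hinv1 : ∀ g, g * inv g * g = g)
    (hinv2 : ∀ g, inv g * g * inv g = inv g)
    (hinv_unique : ∀ g i, g * i * g = g → i * g * i = i → i = inv g)
    (e x : G) (he : e * e = e) (hx : e * x = e) :
    e * inv x = e ∧ x * e = e := by
  have h2 : inv x * e = e := by
    have := congrArg inv hx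
    rw [isg_inv_mul_rev inv hinv1 hinv2 hinv_unique, isg_idem_inv inv hinv1 hinv2 hinv_unique e he] at this
    exact this
  have hxxid : (x * inv x) * (x * inv x) = x * inv x := by
    calc (x * inv x) * (x * inv x) = (x * inv x * x) * inv x := by simp only [mul_assoc]
      _ = x * inv x := by rw [hinv1]
  have hc : e * (x * inv x) = (x * inv x) * e :=
    isg_idem_comm inv hinv1 hinv2 hinv_unique e _ he hxxid
  have h3 : e * (x * inv x) = e := by
    calc e * (x * inv x) = (e * e) * (x * inv x) := by rw [he]
      _ = e * (e * (x * inv x)) := by rw [mul_assoc]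
      _ = e * ((x * inv x) * e) := by rw [hc]
      _ = (e * x) * (inv x * e) := by simp only [mul_assoc]
      _ = e * e := by rw [hx, h2]
      _ = e := he
  constructor
  · calc e * inv x = (e * x) * inv x := by rw [hx]
      _ = e * (x * inv x) := by rw [mul_assoc]
      _ = e := h3
  · calc x * e = x * (inv x * e) := by rw [h2]
      _ = (x * inv x) * e := by rw [mul_assoc]
      _ = e * (x * inv x) := hc.symm
      _ = e := h3

/-- For an inverse semigroup `G` with idempotent set `E` and `g, h ∈ G`:
`{e ∈ E : e g = e h and e ≤ g g⁻¹ h h⁻¹} = {e ∈ E : e (h g⁻¹) = e}`. -/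
theorem stmt11 {G : Type*} [Semigroup G]
    (inv : G → G)
    (hinv1 : ∀ g, g * inv g * g = g)
    (hinv2 : ∀ g, inv g * g * inv g = inv g)
    (hinv_unique : ∀ g i, g * i * g = g → i * g * i = i → i = inv g)
    (g h : G) :
    {e : G | e * e = e ∧ e * g = e * h ∧ e * (g * inv g * (h * inv h)) = e}
      = {e : G | e * e = e ∧ e * (h * inv g) = e} := by
  have hggid : (g * inv g) * (g * inv g) = g * inv g := by
    calc (g * inv g) * (g * inv g) = (g * inv g * g) * inv g := by simp only [mul_assoc]
      _ = g * inv g := by rw [hinv1]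
  have hhhid : (h * inv h) * (h * inv h) = h * inv h := by
    calc (h * inv h) * (h * inv h) = (h * inv h * h) * inv h := by simp only [mul_assoc]
      _ = h * inv h := by rw [hinv1]
  have hc : (g * inv g) * (h * inv h) = (h * inv h) * (g * inv g) :=
    isg_idem_comm inv hinv1 hinv2 hinv_unique _ _ hggid hhhid
  ext e
  simp only [Set.mem_setOf_eq]
  constructor
  · rintro ⟨he, h1, h2⟩
    refine ⟨he, ?_⟩
    have hgg : e * (g * inv g) = e := by
      calc e * (g * inv g)
          = (e * (g * inv g * (h * inv h))) * (g * inv g) := by rw [h2]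
        _ = e * ((g * inv g) * ((h * inv h) * (g * inv g))) := by simp only [mul_assoc]
        _ = e * ((g * inv g) * ((g * inv g) * (h * inv h))) := by rw [← hc]
        _ = e * (((g * inv g) * (g * inv g)) * (h * inv h)) := by simp only [mul_assoc]
        _ = e * ((g * inv g) * (h * inv h)) := by rw [hggid]
        _ = e := by rw [← mul_assoc] at h2 ⊢; exact h2
    calc e * (h * inv g) = (e * h) * inv g := by rw [mul_assoc]
      _ = (e * g) * inv g := by rw [h1]
      _ = e * (g * inv g) := by rw [mul_assoc]
      _ = e := hgg
  · rintro ⟨he, hx⟩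
    have hx' : e * (h * inv g) = e := hx
    obtain ⟨hinvx, -⟩ := isg_le_inv inv hinv1 hinv2 hinv_unique e (h * inv g) he hx'
    have h4 : e * (g * inv h) = e := by
      rw [isg_inv_mul_rev inv hinv1 hinv2 hinv_unique,
        isg_inv_invol inv hinv1 hinv2 hinv_unique] at hinvx
      exact hinvx
    have hcc : (inv h * h) * (inv g * g) = (inv g * g) * (inv h * h) := by
      apply isg_idem_comm inv hinv1 hinv2 hinv_unique
      · calc (inv h * h) * (inv h * h) = (inv h * h * inv h) * h := by simp only [mul_assoc]
          _ = inv h * h := by rw [hinv2]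
      · calc (inv g * g) * (inv g * g) = (inv g * g * inv g) * g := by simp only [mul_assoc]
          _ = inv g * g := by rw [hinv2]
    have hgh : e * g = e * h := by
      calc e * g = (e * (h * inv g)) * g := by rw [hx]
        _ = ((e * (g * inv h)) * h) * (inv g * g) := by rw [h4]; simp only [mul_assoc]
        _ = e * g * ((inv h * h) * (inv g * g)) := by simp only [mul_assoc]
        _ = e * g * ((inv g * g) * (inv h * h)) := by rw [hcc]
        _ = e * ((g * inv g * g) * (inv h * h)) := by simp only [mul_assoc]
        _ = e * (g * (inv h * h)) := by rw [hinv1]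
        _ = (e * (g * inv h)) * h := by simp only [mul_assoc]
        _ = e * h := by rw [h4]
    refine ⟨he, hgh, ?_⟩
    have hgg : e * (g * inv g) = e := by
      calc e * (g * inv g) = (e * g) * inv g := by rw [mul_assoc]
        _ = (e * h) * inv g := by rw [hgh]
        _ = e * (h * inv g) := by rw [mul_assoc]
        _ = e := hx
    have hhh : e * (h * inv h) = e := by
      calc e * (h * inv h) = (e * h) * inv h := by rw [mul_assoc]
        _ = (e * g) * inv h := by rw [hgh]
        _ = e * (g * inv h) := by rw [mul_assoc]
        _ = e := h4
    calc e * (g * inv g * (h * inv h)) = (e * (g * inv g)) * (h * inv h) := by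
          simp only [mul_assoc]
      _ = e * (h * inv h) := by rw [hgg]
      _ = e := hhh
end

section
/- Let G be an inverse semigroup. For g ∈ G define φ_g : G → ℂ by φ_g(t) = 1 if t ≤ g (equivalently t = t t⁻¹ g) and φ_g(t) = 0 otherwise. Then the family (φ_g)_{g ∈ G} is linearly independent in the complex vector space of all functions G → ℂ. -/
/-!
For a finite set of indices, pick one maximal for the natural partial order among those with
nonzero coefficient; evaluating the linear combination at it kills every other term, since
`φ_h(g) ≠ 0` means `g ≤ h`. So the family is unitriangular with respect to `≤`. What needs proof is
that `≤` is a partial order, which rests on idempotents of an inverse semigroup commuting.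
-/

theorem linearIndependent_indicator_Iic {α R : Type*} [PartialOrder α] [Ring R] :
    LinearIndependent R (fun a : α => (Set.Iic a).indicator (fun _ => (1 : R))) := by
  classical
  rw [linearIndependent_iff']
  intro s c hsum
  by_contra! hne
  obtain ⟨a, ha_mem, ha_max⟩ := (s.filter (c · ≠ 0)).exists_maximal (by simpa [Finset.Nonempty])
  have ha : a ∈ s ∧ c a ≠ 0 := by simpa using ha_mem
  have hterm : ∀ i ∈ s,
      c i * (Set.Iic i).indicator (fun _ => (1 : R)) a = if i = a then c a else 0 := by
    intro i hi
    by_cases hia : i = a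
    · simp [hia]
    by_cases hci : c i = 0
    · simp [hci, hia]
    have : ¬ a ≤ i := fun hai => hia (le_antisymm (ha_max (by simp [hi, hci]) hai) hai)
    simp [hia, this]
  have := congrFun hsum a
  simp only [Finset.sum_apply, Pi.smul_apply, smul_eq_mul, Pi.zero_apply] at this
  rw [Finset.sum_congr rfl hterm, Finset.sum_ite_eq' s a, if_pos ha.1] at this
  exact ha.2 this

structure IsInverseSemigroupInv {G : Type*} [Semigroup G] (inv : G → G) : Prop where
  mul_inv_mul : ∀ g, g * inv g * g = g
  inv_mul_inv : ∀ g, inv g * g * inv g = inv g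
  eq_inv : ∀ g i, g * i * g = g → i * g * i = i → i = inv g

namespace IsInverseSemigroupInv

variable {G : Type*} [Semigroup G] {inv : G → G}

theorem inv_inv (h : IsInverseSemigroupInv inv) (g : G) : inv (inv g) = g :=
  (h.eq_inv (inv g) g (h.inv_mul_inv g) (h.mul_inv_mul g)).symm

theorem inv_eq_self (h : IsInverseSemigroupInv inv) {e : G} (he : IsIdempotentElem e) :
    inv e = e :=
  (h.eq_inv e e (by rw [he.eq, he.eq]) (by rw [he.eq, he.eq])).symm

theorem isIdempotentElem_mul_inv (h : IsInverseSemigroupInv inv) (g : G) :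
    IsIdempotentElem (g * inv g) := by
  rw [IsIdempotentElem, ← mul_assoc, h.mul_inv_mul]

theorem isIdempotentElem_mul (h : IsInverseSemigroupInv inv) {e f : G}
    (he : IsIdempotentElem e) (hf : IsIdempotentElem f) : IsIdempotentElem (e * f) := by
  set x := inv (e * f)
  -- `f x e` is also an inverse of `e f`, hence equals `x`; so `x` is idempotent and `e f = inv x = x`
  have hx : x = f * x * e := by
    refine (h.eq_inv _ _ ?_ ?_).symm
    · calc e * f * (f * x * e) * (e * f) = e * (f * f) * x * (e * e) * f := by
            simp only [mul_assoc]
        _ = e * f * x * (e * f) := by simp only [hf.eq, he.eq, mul_assoc]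
        _ = e * f := h.mul_inv_mul _
    · calc f * x * e * (e * f) * (f * x * e) = f * (x * (e * e) * (f * f) * x) * e := by
            simp only [mul_assoc]
        _ = f * (x * (e * f) * x) * e := by simp only [hf.eq, he.eq, mul_assoc]
        _ = f * x * e := by rw [h.inv_mul_inv, mul_assoc]
  have hx_idem : IsIdempotentElem x := by
    calc x * x = f * (x * (e * f) * x) * e := by
          nth_rewrite 1 [hx]; nth_rewrite 2 [hx]; simp only [mul_assoc]
      _ = x := by rw [h.inv_mul_inv]; exact hx.symm
  rwa [← h.inv_inv (e * f), h.inv_eq_self hx_idem]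

theorem commute_of_isIdempotentElem (h : IsInverseSemigroupInv inv) {e f : G}
    (he : IsIdempotentElem e) (hf : IsIdempotentElem f) : Commute e f := by
  have hef := h.isIdempotentElem_mul he hf
  have hfe := h.isIdempotentElem_mul hf he
  have hinv : f * e = inv (e * f) := by
    apply h.eq_inv
    · calc e * f * (f * e) * (e * f) = e * (f * f) * (e * e) * f := by simp only [mul_assoc]
        _ = e * f * (e * f) := by rw [hf.eq, he.eq]; simp only [mul_assoc]
        _ = e * f := hef
    · calc f * e * (e * f) * (f * e) = f * (e * e) * (f * f) * e := by simp only [mul_assoc]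
        _ = f * e * (f * e) := by rw [hf.eq, he.eq]; simp only [mul_assoc]
        _ = f * e := hfe
  rw [Commute, SemiconjBy, hinv, h.inv_eq_self hef]

theorem eq_mul_inv_mul_of_eq_mul (h : IsInverseSemigroupInv inv) {e s t : G}
    (he : IsIdempotentElem e) (hs : s = e * t) : s = s * inv s * t := by
  have hes : e * s = s := by rw [hs, ← mul_assoc, he.eq]
  have hinv_s : inv s * e = inv s := by
    apply h.eq_inv
    · rw [← mul_assoc, mul_assoc _ e, hes, h.mul_inv_mul]
    · rw [mul_assoc _ e s, hes, ← mul_assoc, h.inv_mul_inv]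
  calc s = s * inv s * (e * t) := by rw [← hs, h.mul_inv_mul]
    _ = s * (inv s * e) * t := by simp only [mul_assoc]
    _ = s * inv s * t := by rw [hinv_s]

abbrev naturalPartialOrder (h : IsInverseSemigroupInv inv) : PartialOrder G where
  le s t := s = s * inv s * t
  le_refl g := (h.mul_inv_mul g).symm
  le_trans s t u hst htu := by
    refine h.eq_mul_inv_mul_of_eq_mul
      (h.isIdempotentElem_mul (h.isIdempotentElem_mul_inv s) (h.isIdempotentElem_mul_inv t)) ?_
    calc s = s * inv s * (t * inv t * u) := by rw [← htu, ← hst]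
      _ = s * inv s * (t * inv t) * u := by simp only [mul_assoc]
  le_antisymm s t hst hts := by
    set e := s * inv s
    set f := t * inv t
    have hcomm : f * e = e * f := (h.commute_of_isIdempotentElem
      (h.isIdempotentElem_mul_inv t) (h.isIdempotentElem_mul_inv s)).eq
    symm
    calc t = f * (e * (f * s)) := by rw [← hts, ← hst, ← hts]
      _ = f * e * f * s := by simp only [mul_assoc]
      _ = e * (f * f) * s := by rw [hcomm]; simp only [mul_assoc]
      _ = s := by rw [(h.isIdempotentElem_mul_inv t).eq, mul_assoc, ← hts, ← hst]

end IsInverseSemigroupInv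

/-- For an inverse semigroup `G`, the family of functions
`φ_g : G → ℂ`, `φ_g(t) = 1` if `t ≤ g` (i.e. `t = t t⁻¹ g`) and `0` otherwise,
is linearly independent over `ℂ`. -/
theorem stmt12 {G : Type*} [Semigroup G]
    (inv : G → G)
    (hinv1 : ∀ g, g * inv g * g = g)
    (hinv2 : ∀ g, inv g * g * inv g = inv g)
    (hinv_unique : ∀ g i, g * i * g = g → i * g * i = i → i = inv g) :
    LinearIndependent ℂ
      (fun g : G => Set.indicator {t : G | t = t * inv t * g} (fun _ => (1 : ℂ))) :=
  letI := (IsInverseSemigroupInv.mk hinv1 hinv2 hinv_unique).naturalPartialOrder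
  linearIndependent_indicator_Iic
end

section
/- Let G be an inverse semigroup with idempotent set E. For g, h ∈ G and a semicharacter φ of E define k(g, h)(φ) := 1 if there exists e ∈ E with φ(e) = 1, e g = e h and e·(g g⁻¹ h h⁻¹) = e, and k(g, h)(φ) := 0 otherwise (this is the value at φ of the C₀(X)-valued inner product ⟨φ_g, φ_h⟩ of the compatible ℓ²(G)-space). Then for every finitely supported function λ : G → ℂ and every semicharacter φ, the number Σ_{g, h ∈ G} conj(λ(g)) · λ(h) · k(g, h)(φ) is a nonnegative real; and if this sum vanishes for every semicharacter φ, then λ = 0. (Positive definiteness of the inner product of the compatible ℓ²(G)-space.) -/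
open scoped ComplexOrder
open scoped Classical

set_option linter.unusedSectionVars false
set_option linter.unusedVariables false

/-- A semicharacter of the idempotent semilattice `E = {e : G // e * e = e}` of an inverse
semigroup `G`: a `{0,1}`-valued, multiplicative, not identically zero map on `E`. -/
def IsSemicharacter {G : Type*} [Semigroup G] (φ : {e : G // e * e = e} → ℂ) : Prop :=
  (∀ e, φ e = 0 ∨ φ e = 1) ∧
  (∀ e f ef : {e : G // e * e = e}, (ef : G) = (e : G) * (f : G) → φ ef = φ e * φ f) ∧
  (∃ e, φ e = 1)

/-- The value at a semicharacter `φ` of the `C₀(X)`-valued inner product `⟨φ_g, φ_h⟩` of the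
compatible `ℓ²(G)`-space: `1` if some idempotent `e` with `φ(e) = 1` satisfies `e g = e h`
and `e ≤ g g⁻¹ h h⁻¹`, and `0` otherwise. -/
noncomputable def innerKernel {G : Type*} [Semigroup G] (inv : G → G) (g h : G)
    (φ : {e : G // e * e = e} → ℂ) : ℂ :=
  Set.indicator
    {ψ : {e : G // e * e = e} → ℂ |
      ∃ e : {e : G // e * e = e}, ψ e = 1 ∧ (e : G) * g = (e : G) * h ∧
        (e : G) * (g * inv g * (h * inv h)) = (e : G)}
    (fun _ => (1 : ℂ)) φ

namespace Stmt13Aux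
variable {G : Type*} [Semigroup G]

lemma gg_idem (inv : G → G) (hinv1 : ∀ g, g * inv g * g = g) (g : G) :
    (g * inv g) * (g * inv g) = g * inv g := by
  have h := hinv1 g
  calc (g * inv g) * (g * inv g) = (g * inv g * g) * inv g := by simp only [mul_assoc]
    _ = g * inv g := by rw [h]

open scoped Classical in
noncomputable def Scl (inv : G → G) (hinv1 : ∀ g, g * inv g * g = g) (lam : G →₀ ℂ)
    (φ : {e : G // e * e = e} → ℂ) : Finset G :=
  lam.support.filter fun g => φ ⟨g * inv g, gg_idem inv hinv1 g⟩ = 1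

open scoped Classical in
noncomputable def cls (inv : G → G) (hinv1 : ∀ g, g * inv g * g = g) (lam : G →₀ ℂ)
    (φ : {e : G // e * e = e} → ℂ) (g : G) : Finset G :=
  (Scl inv hinv1 lam φ).filter fun x =>
    ∃ e : {e : G // e * e = e}, φ e = 1 ∧ (e : G) * g = (e : G) * x

noncomputable def princ (f : G) : {e : G // e * e = e} → ℂ :=
  fun e => if f * (e : G) = f then 1 else 0

lemma princ_eq_one {f : G} {e : {e : G // e * e = e}} :
    princ f e = 1 ↔ f * (e : G) = f := by
  simp [princ]

variable (inv : G → G)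
    (hinv1 : ∀ g, g * inv g * g = g)
    (hinv2 : ∀ g, inv g * g * inv g = inv g)
    (hinv_unique : ∀ g i, g * i * g = g → i * g * i = i → i = inv g)
include hinv1 hinv2 hinv_unique

lemma inv_invol (g : G) : inv (inv g) = g :=
  (hinv_unique (inv g) g (hinv2 g) (hinv1 g)).symm

lemma inv_of_idem {e : G} (he : e * e = e) : inv e = e :=
  (hinv_unique e e (by rw [he, he]) (by rw [he, he])).symm

lemma comm_core {e f : G} (he : e * e = e) (hf : f * f = f) :
    inv (e * f) = f * inv (e * f) * e := by
  have he' : ∀ x : G, e * (e * x) = e * x := fun x => by rw [← mul_assoc, he]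
  have hf' : ∀ x : G, f * (f * x) = f * x := fun x => by rw [← mul_assoc, hf]
  refine (hinv_unique _ _ ?_ ?_).symm
  · have h1 := hinv1 (e * f)
    simp only [mul_assoc] at h1 ⊢
    simp only [he', hf']
    exact h1
  · have h2 := hinv2 (e * f)
    have h2' := congrArg (· * e) h2
    simp only [mul_assoc] at h2' ⊢
    simp only [he', hf']
    rw [h2']

lemma inv_mul_sq {e f : G} (he : e * e = e) (hf : f * f = f) :
    inv (e * f) * inv (e * f) = inv (e * f) := by
  have hc := comm_core inv hinv1 hinv2 hinv_unique he hf
  rw [hc]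
  have h2 := hinv2 (e * f)
  have h2' := congrArg (· * e) h2
  simp only [mul_assoc] at h2' ⊢
  rw [h2']

lemma inv_mul_idem {e f : G} (he : e * e = e) (hf : f * f = f) :
    inv (e * f) = e * f := by
  have hi2 := inv_mul_sq inv hinv1 hinv2 hinv_unique he hf
  have hef : e * f = inv (inv (e * f)) := (inv_invol inv hinv1 hinv2 hinv_unique (e * f)).symm
  rw [inv_of_idem inv hinv1 hinv2 hinv_unique hi2] at hef
  exact hef.symm

lemma mul_idem {e f : G} (he : e * e = e) (hf : f * f = f) :
    (e * f) * (e * f) = e * f := by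
  rw [← inv_mul_idem inv hinv1 hinv2 hinv_unique he hf]
  exact inv_mul_sq inv hinv1 hinv2 hinv_unique he hf

lemma idem_comm {e f : G} (he : e * e = e) (hf : f * f = f) :
    e * f = f * e := by
  have he' : ∀ x : G, e * (e * x) = e * x := fun x => by rw [← mul_assoc, he]
  have hf' : ∀ x : G, f * (f * x) = f * x := fun x => by rw [← mul_assoc, hf]
  have hef := mul_idem inv hinv1 hinv2 hinv_unique he hf
  have hfe := mul_idem inv hinv1 hinv2 hinv_unique hf he
  have key : f * e = inv (e * f) := by
    refine hinv_unique _ _ ?_ ?_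
    · simp only [mul_assoc] at hef ⊢
      simp only [he', hf']
      exact hef
    · simp only [mul_assoc] at hfe ⊢
      simp only [he', hf']
      exact hfe
  rw [key, inv_mul_idem inv hinv1 hinv2 hinv_unique he hf]


open scoped Classical in
lemma kernel_eq (φ : {e : G // e * e = e} → ℂ) (hφ : IsSemicharacter φ) (g h : G) :
    innerKernel inv g h φ =
      if (φ ⟨g * inv g, gg_idem inv hinv1 g⟩ = 1 ∧ φ ⟨h * inv h, gg_idem inv hinv1 h⟩ = 1 ∧
          ∃ e : {e : G // e * e = e}, φ e = 1 ∧ (e : G) * g = (e : G) * h) then 1 else 0 := by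
  classical
  obtain ⟨h01, hmul, hne⟩ := hφ
  rw [innerKernel, Set.indicator_apply]
  refine if_congr ?_ rfl rfl
  constructor
  · rintro ⟨e, he1, he2, he3⟩
    set a : {e : G // e * e = e} := ⟨g * inv g, gg_idem inv hinv1 g⟩ with ha
    set b : {e : G // e * e = e} := ⟨h * inv h, gg_idem inv hinv1 h⟩ with hb
    set ab : {e : G // e * e = e} :=
      ⟨(g * inv g) * (h * inv h),
        mul_idem inv hinv1 hinv2 hinv_unique (gg_idem inv hinv1 g) (gg_idem inv hinv1 h)⟩ with hab
    have h1 : φ e = φ e * φ ab := hmul e ab e he3.symm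
    have h2 : φ ab = φ a * φ b := hmul a b ab rfl
    rw [he1, h2] at h1
    have hA : φ a = 1 := by
      rcases h01 a with h' | h'
      · rw [h'] at h1; simp at h1
      · exact h'
    have hB : φ b = 1 := by
      rcases h01 b with h' | h'
      · rw [h'] at h1; simp at h1
      · exact h'
    exact ⟨hA, hB, e, he1, he2⟩
  · rintro ⟨hA, hB, e, he1, he2⟩
    have hc : (g * inv g * (h * inv h)) * (g * inv g * (h * inv h)) = g * inv g * (h * inv h) :=
      mul_idem inv hinv1 hinv2 hinv_unique (gg_idem inv hinv1 g) (gg_idem inv hinv1 h)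
    set c : G := g * inv g * (h * inv h) with hcdef
    have hec : ((e : G) * c) * ((e : G) * c) = (e : G) * c :=
      mul_idem inv hinv1 hinv2 hinv_unique e.2 hc
    refine ⟨⟨(e : G) * c, hec⟩, ?_, ?_, ?_⟩
    · have h1 := hmul e ⟨c, hc⟩ ⟨(e : G) * c, hec⟩ rfl
      have h2 := hmul ⟨g * inv g, gg_idem inv hinv1 g⟩ ⟨h * inv h, gg_idem inv hinv1 h⟩
        ⟨c, hc⟩ rfl
      rw [h1, h2, he1, hA, hB]; ring
    · show ((e : G) * c) * g = ((e : G) * c) * h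
      calc ((e : G) * c) * g = (c * (e : G)) * g := by
            rw [idem_comm inv hinv1 hinv2 hinv_unique e.2 hc]
        _ = c * ((e : G) * g) := mul_assoc _ _ _
        _ = c * ((e : G) * h) := by rw [he2]
        _ = (c * (e : G)) * h := (mul_assoc _ _ _).symm
        _ = ((e : G) * c) * h := by
            rw [idem_comm inv hinv1 hinv2 hinv_unique e.2 hc]
    · show ((e : G) * c) * c = (e : G) * c
      calc ((e : G) * c) * c = (e : G) * (c * c) := mul_assoc _ _ _
        _ = (e : G) * c := by rw [hc]


lemma rel_trans (φ : {e : G // e * e = e} → ℂ)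
    (hmul : ∀ e f ef : {e : G // e * e = e}, (ef : G) = (e : G) * (f : G) → φ ef = φ e * φ f)
    {x y z : G}
    (h1 : ∃ e : {e : G // e * e = e}, φ e = 1 ∧ (e : G) * x = (e : G) * y)
    (h2 : ∃ e : {e : G // e * e = e}, φ e = 1 ∧ (e : G) * y = (e : G) * z) :
    ∃ e : {e : G // e * e = e}, φ e = 1 ∧ (e : G) * x = (e : G) * z := by
  obtain ⟨e, he1, he2⟩ := h1
  obtain ⟨f, hf1, hf2⟩ := h2
  refine ⟨⟨(e : G) * (f : G), mul_idem inv hinv1 hinv2 hinv_unique e.2 f.2⟩, ?_, ?_⟩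
  · rw [hmul e f ⟨(e : G) * (f : G), mul_idem inv hinv1 hinv2 hinv_unique e.2 f.2⟩ rfl,
      he1, hf1, one_mul]
  · show ((e : G) * (f : G)) * x = ((e : G) * (f : G)) * z
    calc ((e : G) * (f : G)) * x = ((f : G) * (e : G)) * x := by
          rw [idem_comm inv hinv1 hinv2 hinv_unique e.2 f.2]
      _ = (f : G) * ((e : G) * x) := mul_assoc _ _ _
      _ = (f : G) * ((e : G) * y) := by rw [he2]
      _ = ((f : G) * (e : G)) * y := (mul_assoc _ _ _).symm
      _ = ((e : G) * (f : G)) * y := by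
          rw [idem_comm inv hinv1 hinv2 hinv_unique e.2 f.2]
      _ = (e : G) * ((f : G) * y) := mul_assoc _ _ _
      _ = (e : G) * ((f : G) * z) := by rw [hf2]
      _ = ((e : G) * (f : G)) * z := (mul_assoc _ _ _).symm

lemma class_eq (lam : G →₀ ℂ) (φ : {e : G // e * e = e} → ℂ) (hφ : IsSemicharacter φ)
    {g₀ : G} (hg₀ : g₀ ∈ Scl inv hinv1 lam φ) :
    (Scl inv hinv1 lam φ).filter
        (fun x => cls inv hinv1 lam φ x = cls inv hinv1 lam φ g₀)
      = cls inv hinv1 lam φ g₀ := by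
  obtain ⟨h01, hmul, hne⟩ := hφ
  ext x
  rw [Finset.mem_filter]
  constructor
  · rintro ⟨hxS, hx⟩
    have hxx : x ∈ cls inv hinv1 lam φ x := by
      rw [cls, Finset.mem_filter]
      obtain ⟨e, he⟩ := hne
      exact ⟨hxS, e, he, rfl⟩
    rw [hx] at hxx
    exact hxx
  · intro hxC
    rw [cls, Finset.mem_filter] at hxC
    obtain ⟨hxS, hrx⟩ := hxC
    refine ⟨hxS, ?_⟩
    ext y
    rw [cls, Finset.mem_filter, cls, Finset.mem_filter]
    constructor
    · rintro ⟨hyS, hry⟩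
      exact ⟨hyS, rel_trans inv hinv1 hinv2 hinv_unique φ hmul hrx hry⟩
    · rintro ⟨hyS, hry⟩
      refine ⟨hyS, rel_trans inv hinv1 hinv2 hinv_unique φ hmul ?_ hry⟩
      obtain ⟨e, he1, he2⟩ := hrx
      exact ⟨e, he1, he2.symm⟩

lemma sum_repr (lam : G →₀ ℂ) (φ : {e : G // e * e = e} → ℂ) (hφ : IsSemicharacter φ) :
    ∑ g ∈ lam.support, ∑ h ∈ lam.support,
        (starRingEnd ℂ) (lam g) * lam h * innerKernel inv g h φ
      = ∑ C ∈ (Scl inv hinv1 lam φ).image (cls inv hinv1 lam φ),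
          (starRingEnd ℂ) (∑ x ∈ C, lam x) * (∑ x ∈ C, lam x) := by
  obtain ⟨h01, hmul, hne⟩ := hφ
  have step1 : ∑ g ∈ lam.support, ∑ h ∈ lam.support,
        (starRingEnd ℂ) (lam g) * lam h * innerKernel inv g h φ
      = ∑ g ∈ Scl inv hinv1 lam φ,
          (starRingEnd ℂ) (lam g) * ∑ x ∈ cls inv hinv1 lam φ g, lam x := by
    have e1 : ∀ g ∈ lam.support,
        (∑ h ∈ lam.support, (starRingEnd ℂ) (lam g) * lam h * innerKernel inv g h φ)
          = if φ ⟨g * inv g, gg_idem inv hinv1 g⟩ = 1 then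
              (∑ h ∈ lam.support, if φ ⟨h * inv h, gg_idem inv hinv1 h⟩ = 1 then
                (if (∃ e : {e : G // e * e = e}, φ e = 1 ∧ (e : G) * g = (e : G) * h) then
                  (starRingEnd ℂ) (lam g) * lam h else 0) else 0) else 0 := by
      intro g hg
      by_cases hg1 : φ ⟨g * inv g, gg_idem inv hinv1 g⟩ = 1
      · rw [if_pos hg1]
        refine Finset.sum_congr rfl fun h hh => ?_
        rw [kernel_eq inv hinv1 hinv2 hinv_unique φ ⟨h01, hmul, hne⟩ g h]
        by_cases hh1 : φ ⟨h * inv h, gg_idem inv hinv1 h⟩ = 1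
        · by_cases hr : ∃ e : {e : G // e * e = e}, φ e = 1 ∧ (e : G) * g = (e : G) * h
          · simp [hg1, hh1, hr]
          · simp [hg1, hh1, hr]
        · simp [hh1]
      · rw [if_neg hg1]
        refine Finset.sum_eq_zero fun h hh => ?_
        rw [kernel_eq inv hinv1 hinv2 hinv_unique φ ⟨h01, hmul, hne⟩ g h]
        simp [hg1]
    rw [Finset.sum_congr rfl e1, ← Finset.sum_filter]
    rw [Scl]
    refine Finset.sum_congr rfl fun g hg => ?_
    rw [← Finset.sum_filter, ← Finset.sum_filter, cls, Scl, Finset.mul_sum]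
  rw [step1]
  have hmaps : ∀ g ∈ Scl inv hinv1 lam φ,
      cls inv hinv1 lam φ g ∈ (Scl inv hinv1 lam φ).image (cls inv hinv1 lam φ) :=
    fun g hg => Finset.mem_image_of_mem _ hg
  rw [← Finset.sum_fiberwise_of_maps_to hmaps]
  refine Finset.sum_congr rfl fun C hC => ?_
  obtain ⟨g₀, hg₀S, hg₀⟩ := Finset.mem_image.1 hC
  have hfib : (Scl inv hinv1 lam φ).filter (fun x => cls inv hinv1 lam φ x = C) = C := by
    rw [← hg₀]
    exact class_eq inv hinv1 hinv2 hinv_unique lam φ ⟨h01, hmul, hne⟩ hg₀S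
  calc ∑ g ∈ (Scl inv hinv1 lam φ).filter (fun x => cls inv hinv1 lam φ x = C),
        (starRingEnd ℂ) (lam g) * ∑ x ∈ cls inv hinv1 lam φ g, lam x
      = ∑ g ∈ (Scl inv hinv1 lam φ).filter (fun x => cls inv hinv1 lam φ x = C),
        (starRingEnd ℂ) (lam g) * ∑ x ∈ C, lam x := by
        refine Finset.sum_congr rfl fun g hg => ?_
        rw [(Finset.mem_filter.1 hg).2]
    _ = (∑ g ∈ (Scl inv hinv1 lam φ).filter (fun x => cls inv hinv1 lam φ x = C),
          (starRingEnd ℂ) (lam g)) * ∑ x ∈ C, lam x := (Finset.sum_mul _ _ _).symm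
    _ = (starRingEnd ℂ) (∑ x ∈ C, lam x) * ∑ x ∈ C, lam x := by
        rw [hfib, map_sum]


lemma princ_semichar {f : G} (hf : f * f = f) : IsSemicharacter (princ f) := by
  refine ⟨fun e => ?_, fun e e' ee' hcoe => ?_, ⟨⟨f, hf⟩, by simp [princ, hf]⟩⟩
  · by_cases h : f * (e : G) = f <;> simp [princ, h]
  · have hf' : ∀ x : G, f * (f * x) = f * x := fun x => by rw [← mul_assoc, hf]
    simp only [princ, hcoe]
    by_cases h1 : f * ((e : G) * (e' : G)) = f
    · have h2 : f * (e : G) = f := by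
        calc f * (e : G) = (f * ((e : G) * (e' : G))) * (e : G) := by rw [h1]
          _ = f * ((e : G) * ((e' : G) * (e : G))) := by simp only [mul_assoc]
          _ = f * ((e : G) * ((e : G) * (e' : G))) := by
              rw [idem_comm inv hinv1 hinv2 hinv_unique e'.2 e.2]
          _ = f * (((e : G) * (e : G)) * (e' : G)) := by
              rw [← mul_assoc (e : G) (e : G) (e' : G)]
          _ = f * ((e : G) * (e' : G)) := by rw [e.2]
          _ = f := h1
      have h3 : f * (e' : G) = f := by
        calc f * (e' : G) = (f * ((e : G) * (e' : G))) * (e' : G) := by rw [h1]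
          _ = f * ((e : G) * ((e' : G) * (e' : G))) := by simp only [mul_assoc]
          _ = f * ((e : G) * (e' : G)) := by rw [e'.2]
          _ = f := h1
      rw [if_pos h1, if_pos h2, if_pos h3, one_mul]
    · rw [if_neg h1]
      by_cases h2 : f * (e : G) = f
      · by_cases h3 : f * (e' : G) = f
        · exfalso
          apply h1
          rw [← mul_assoc, h2, h3]
        · rw [if_neg h3, mul_zero]
      · rw [if_neg h2, zero_mul]

lemma princ_inv_eq {g₀ h p : G} (hp : p * p = p) (hgp : g₀ = p * h) :
    inv g₀ = inv h * p := by
  have hq := gg_idem inv hinv1 h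
  have hcomm : (h * inv h) * p = p * (h * inv h) :=
    idem_comm inv hinv1 hinv2 hinv_unique hq hp
  have hkey : (p * h) * (inv h * p) = p * (h * inv h) := by
    calc (p * h) * (inv h * p) = p * ((h * inv h) * p) := by simp only [mul_assoc]
      _ = p * (p * (h * inv h)) := by rw [hcomm]
      _ = (p * p) * (h * inv h) := (mul_assoc _ _ _).symm
      _ = p * (h * inv h) := by rw [hp]
  rw [hgp]
  refine (hinv_unique (p * h) (inv h * p) ?_ ?_).symm
  · calc (p * h) * (inv h * p) * (p * h) = (p * (h * inv h)) * (p * h) := by rw [hkey]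
      _ = ((p * (h * inv h)) * p) * h := (mul_assoc _ _ _).symm
      _ = (p * ((h * inv h) * p)) * h := by rw [mul_assoc p (h * inv h) p]
      _ = (p * (p * (h * inv h))) * h := by rw [hcomm]
      _ = ((p * p) * (h * inv h)) * h := by rw [← mul_assoc p p (h * inv h)]
      _ = (p * (h * inv h)) * h := by rw [hp]
      _ = p * ((h * inv h) * h) := mul_assoc _ _ _
      _ = p * h := by rw [hinv1 h]
  · calc (inv h * p) * (p * h) * (inv h * p)
        = (inv h * ((p * p) * h)) * (inv h * p) := by simp only [mul_assoc]
      _ = (inv h * (p * h)) * (inv h * p) := by rw [hp]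
      _ = inv h * ((p * h) * (inv h * p)) := by simp only [mul_assoc]
      _ = inv h * (p * (h * inv h)) := by rw [hkey]
      _ = inv h * ((h * inv h) * p) := by rw [hcomm]
      _ = (inv h * h * inv h) * p := by simp only [mul_assoc]
      _ = inv h * p := by rw [hinv2 h]

lemma princ_scl_mem (lam : G →₀ ℂ) {g₀ : G} (hg₀ : g₀ ∈ lam.support) :
    g₀ ∈ Scl inv hinv1 lam (princ (g₀ * inv g₀)) := by
  rw [Scl, Finset.mem_filter]
  exact ⟨hg₀, princ_eq_one.2 (gg_idem inv hinv1 g₀)⟩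

lemma princ_cls (lam : G →₀ ℂ) {g₀ : G} (hg₀ : g₀ ∈ lam.support) :
    cls inv hinv1 lam (princ (g₀ * inv g₀)) g₀
      = lam.support.filter (fun h => ∃ p : G, p * p = p ∧ g₀ = p * h) := by
  ext h
  rw [cls, Scl, Finset.mem_filter, Finset.mem_filter, Finset.mem_filter]
  constructor
  · rintro ⟨⟨hhs, _⟩, e, he1, he2⟩
    rw [princ_eq_one] at he1
    refine ⟨hhs, g₀ * inv g₀, gg_idem inv hinv1 g₀, ?_⟩
    calc g₀ = (g₀ * inv g₀) * g₀ := (hinv1 g₀).symm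
      _ = ((g₀ * inv g₀) * (e : G)) * g₀ := by rw [he1]
      _ = (g₀ * inv g₀) * ((e : G) * g₀) := mul_assoc _ _ _
      _ = (g₀ * inv g₀) * ((e : G) * h) := by rw [he2]
      _ = ((g₀ * inv g₀) * (e : G)) * h := (mul_assoc _ _ _).symm
      _ = (g₀ * inv g₀) * h := by rw [he1]
  · rintro ⟨hhs, p, hp, hgp⟩
    have hinvg : inv g₀ = inv h * p := princ_inv_eq inv hinv1 hinv2 hinv_unique hp hgp
    have hq := gg_idem inv hinv1 h
    have hcomm : (h * inv h) * p = p * (h * inv h) :=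
      idem_comm inv hinv1 hinv2 hinv_unique hq hp
    have hfval : g₀ * inv g₀ = p * (h * inv h) := by
      rw [hinvg, hgp]
      calc (p * h) * (inv h * p) = p * ((h * inv h) * p) := by simp only [mul_assoc]
        _ = p * (p * (h * inv h)) := by rw [hcomm]
        _ = (p * p) * (h * inv h) := (mul_assoc _ _ _).symm
        _ = p * (h * inv h) := by rw [hp]
    have hfh : (g₀ * inv g₀) * h = g₀ := by
      rw [hfval]
      calc (p * (h * inv h)) * h = p * ((h * inv h) * h) := mul_assoc _ _ _
        _ = p * h := by rw [hinv1 h]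
        _ = g₀ := hgp.symm
    have hBh : princ (g₀ * inv g₀) ⟨h * inv h, gg_idem inv hinv1 h⟩ = 1 := by
      rw [princ_eq_one]
      show (g₀ * inv g₀) * (h * inv h) = g₀ * inv g₀
      rw [hfval, mul_assoc, hq]
    refine ⟨⟨hhs, hBh⟩, ⟨g₀ * inv g₀, gg_idem inv hinv1 g₀⟩, ?_, ?_⟩
    · exact princ_eq_one.2 (gg_idem inv hinv1 g₀)
    · show (g₀ * inv g₀) * g₀ = (g₀ * inv g₀) * h
      rw [hinv1 g₀, hfh]


lemma le_refl' (g : G) : ∃ p : G, p * p = p ∧ g = p * g :=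
  ⟨g * inv g, gg_idem inv hinv1 g, (hinv1 g).symm⟩

lemma le_trans' {g h k : G} (h1 : ∃ p : G, p * p = p ∧ g = p * h)
    (h2 : ∃ p : G, p * p = p ∧ h = p * k) : ∃ p : G, p * p = p ∧ g = p * k := by
  obtain ⟨p, hp, hgp⟩ := h1
  obtain ⟨q, hq, hhq⟩ := h2
  exact ⟨p * q, mul_idem inv hinv1 hinv2 hinv_unique hp hq,
    by rw [hgp, hhq, ← mul_assoc]⟩

lemma le_antisymm' {g h : G} (h1 : ∃ p : G, p * p = p ∧ g = p * h)
    (h2 : ∃ p : G, p * p = p ∧ h = p * g) : g = h := by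
  obtain ⟨p, hp, hg⟩ := h1
  obtain ⟨q, hq, hh⟩ := h2
  calc g = p * h := hg
    _ = p * (q * g) := by rw [← hh]
    _ = p * (q * (p * h)) := by rw [hg]
    _ = (p * (q * p)) * h := by simp only [mul_assoc]
    _ = (p * (p * q)) * h := by rw [idem_comm inv hinv1 hinv2 hinv_unique hq hp]
    _ = ((p * p) * q) * h := by rw [← mul_assoc p p q]
    _ = (p * q) * h := by rw [hp]
    _ = (q * p) * h := by rw [idem_comm inv hinv1 hinv2 hinv_unique hp hq]
    _ = q * (p * h) := mul_assoc _ _ _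
    _ = q * g := by rw [← hg]
    _ = h := hh.symm

end Stmt13Aux

open Stmt13Aux in
/-- Positive definiteness of the inner product of the compatible `ℓ²(G)`-space:
for every finitely supported `λ : G → ℂ` and every semicharacter `φ` the sum
`Σ conj(λ g) · λ h · k(g,h)(φ)` is a nonnegative real, and if it vanishes for every
semicharacter then `λ = 0`. -/
theorem stmt13 {G : Type*} [Semigroup G]
    (inv : G → G)
    (hinv1 : ∀ g, g * inv g * g = g)
    (hinv2 : ∀ g, inv g * g * inv g = inv g)
    (hinv_unique : ∀ g i, g * i * g = g → i * g * i = i → i = inv g)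
    (lam : G →₀ ℂ) :
    (∀ φ : {e : G // e * e = e} → ℂ, IsSemicharacter φ →
      0 ≤ ∑ g ∈ lam.support, ∑ h ∈ lam.support,
        (starRingEnd ℂ) (lam g) * lam h * innerKernel inv g h φ) ∧
    ((∀ φ : {e : G // e * e = e} → ℂ, IsSemicharacter φ →
      (∑ g ∈ lam.support, ∑ h ∈ lam.support,
        (starRingEnd ℂ) (lam g) * lam h * innerKernel inv g h φ) = 0) → lam = 0) := by
  have hnn : ∀ (C : Finset G), (0 : ℂ) ≤ (starRingEnd ℂ) (∑ x ∈ C, lam x) * (∑ x ∈ C, lam x) :=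
    fun C => star_mul_self_nonneg _
  constructor
  · intro φ hφ
    rw [sum_repr inv hinv1 hinv2 hinv_unique lam φ hφ]
    exact Finset.sum_nonneg fun C _ => hnn C
  · intro hz
    have key : ∀ g₀ ∈ lam.support,
        ∑ h ∈ lam.support.filter (fun h => ∃ p : G, p * p = p ∧ g₀ = p * h), lam h = 0 := by
      intro g₀ hg₀
      have hφ := princ_semichar inv hinv1 hinv2 hinv_unique (gg_idem inv hinv1 g₀)
      have h0 := hz (princ (g₀ * inv g₀)) hφ
      rw [sum_repr inv hinv1 hinv2 hinv_unique lam _ hφ] at h0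
      have hterm := (Finset.sum_eq_zero_iff_of_nonneg (fun C _ => hnn C)).1 h0
      have hCmem : cls inv hinv1 lam (princ (g₀ * inv g₀)) g₀
          ∈ (Scl inv hinv1 lam (princ (g₀ * inv g₀))).image
              (cls inv hinv1 lam (princ (g₀ * inv g₀))) :=
        Finset.mem_image_of_mem _ (princ_scl_mem inv hinv1 hinv2 hinv_unique lam hg₀)
      have hzero := hterm _ hCmem
      have hσ : (∑ x ∈ cls inv hinv1 lam (princ (g₀ * inv g₀)) g₀, lam x) = 0 := by
        rcases mul_eq_zero.1 hzero with h' | h'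
        · simpa using congrArg (starRingEnd ℂ) h'
        · exact h'
      rw [princ_cls inv hinv1 hinv2 hinv_unique lam hg₀] at hσ
      exact hσ
    by_contra hne
    have hsupp : lam.support.Nonempty := Finsupp.support_nonempty_iff.2 hne
    obtain ⟨g₀, hg₀, hmin⟩ := Finset.exists_min_image lam.support
      (fun g => (lam.support.filter (fun h => ∃ p : G, p * p = p ∧ g = p * h)).card) hsupp
    have hsingle : lam.support.filter (fun h => ∃ p : G, p * p = p ∧ g₀ = p * h) = {g₀} := by
      apply Finset.Subset.antisymm
      · intro h hh
        rw [Finset.mem_filter] at hh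
        obtain ⟨hhs, hle⟩ := hh
        rw [Finset.mem_singleton]
        by_contra hne'
        have hsub : lam.support.filter (fun k => ∃ p : G, p * p = p ∧ h = p * k)
            ⊆ lam.support.filter (fun k => ∃ p : G, p * p = p ∧ g₀ = p * k) := by
          intro k hk
          rw [Finset.mem_filter] at hk ⊢
          exact ⟨hk.1, le_trans' inv hinv1 hinv2 hinv_unique hle hk.2⟩
        have hgnot : g₀ ∉ lam.support.filter (fun k => ∃ p : G, p * p = p ∧ h = p * k) := by
          intro hcon
          rw [Finset.mem_filter] at hcon
          exact hne' (le_antisymm' inv hinv1 hinv2 hinv_unique hle hcon.2).symm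
        have hgin : g₀ ∈ lam.support.filter (fun k => ∃ p : G, p * p = p ∧ g₀ = p * k) := by
          rw [Finset.mem_filter]
          exact ⟨hg₀, le_refl' inv hinv1 hinv2 hinv_unique g₀⟩
        have hlt := Finset.card_lt_card
          ((Finset.ssubset_iff_of_subset hsub).2 ⟨g₀, hgin, hgnot⟩)
        exact absurd (hmin h hhs) (not_le.2 hlt)
      · intro h hh
        rw [Finset.mem_singleton] at hh
        subst hh
        rw [Finset.mem_filter]
        exact ⟨hg₀, le_refl' inv hinv1 hinv2 hinv_unique h⟩
    have hzz := key g₀ hg₀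
    rw [hsingle, Finset.sum_singleton] at hzz
    exact (Finsupp.mem_support_iff.1 hg₀) hzz
end

section
/- Let G be an inverse semigroup with idempotent set E, let X be the space of semicharacters of E with the topology of pointwise convergence, and fix g ∈ G. Set U_g := {φ ∈ X : there exists e ∈ E with e g = e and φ(e) = 1} (the carrier of the pointwise supremum ⋁{1_e : e ∈ E, e ≤ g}). Then the indicator function 1_{U_g} : X → ℝ is continuous and vanishes at infinity (i.e. lies in C₀(X)) if and only if there exists a finite subset F ⊆ {e ∈ E : e g = e} such that U_g = ⋃_{e ∈ F} {φ ∈ X : φ(e) = 1}. (Hence G is E-continuous iff for every g ∈ G the supremum ⋁{e ∈ E : e ≤ g} can be realized by a finite subset F ⊆ E.) -/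
/-- The space `X` of semicharacters of `E`, with the topology of pointwise convergence
(subspace of the product topology). -/
abbrev SemicharSpace (G : Type*) [Semigroup G] : Type _ :=
  {φ : {e : G // e * e = e} → ℂ // IsSemicharacter φ}

/-!
The indicator of a set `U` is continuous and vanishes at infinity exactly when `U` is clopen and
compact. Each `D_e = {φ : φ(e) = 1}` is clopen and compact, being a closed subset of the compact
cube `{0,1}^E`, and `U_g` is the union of the open sets `D_e` with `e ≤ g`. So if `U_g` is
compact, finitely many `D_e` cover it; conversely a finite union of the `D_e` is clopen and compact.
-/

open Set Filter Topology

section Indicator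

variable {X : Type*} [TopologicalSpace X] {U : Set X}

lemma continuous_indicator_one_and_tendsto_cocompact_iff :
    (Continuous (U.indicator fun _ => (1 : ℝ)) ∧
        Tendsto (U.indicator fun _ => (1 : ℝ)) (cocompact X) (𝓝 0)) ↔
      IsClopen U ∧ IsCompact U := by
  have preimage_eq {t : Set ℝ} (h0 : (0 : ℝ) ∉ t) (h1 : (1 : ℝ) ∈ t) :
      (U.indicator fun _ => (1 : ℝ)) ⁻¹' t = U := by
    simp [indicator_preimage_of_notMem _ _ h0, h1]
  constructor
  · rintro ⟨hcont, htendsto⟩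
    have hclopen : IsClopen U :=
      ⟨preimage_eq (t := {1}) (by simp) rfl ▸ isClosed_singleton.preimage hcont,
        preimage_eq (t := {0}ᶜ) (by simp) (by simp) ▸ isOpen_compl_singleton.preimage hcont⟩
    have hcompl : Uᶜ ∈ cocompact X := by
      have h : (U.indicator fun _ => (1 : ℝ)) ⁻¹' {1}ᶜ = Uᶜ := by
        rw [preimage_compl, preimage_eq (t := {1}) (by simp) rfl]
      exact h ▸ htendsto (isOpen_compl_singleton.mem_nhds (by simp))
    obtain ⟨K, hK, hUK⟩ := mem_cocompact'.mp hcompl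
    exact ⟨hclopen, hK.of_isClosed_subset hclopen.isClosed (compl_compl U ▸ hUK)⟩
  · rintro ⟨hclopen, hcompact⟩
    refine ⟨hclopen.continuous_indicator continuous_const, tendsto_const_nhds.congr' ?_⟩
    filter_upwards [hcompact.compl_mem_cocompact] with x hx
    exact (indicator_of_notMem hx _).symm

end Indicator

lemma IsCompact.exists_finset_eq_biUnion {X ι : Type*} [TopologicalSpace X] {s : Set X}
    {b : Set ι} {c : ι → Set X} (hs : IsCompact s) (hc : ∀ i ∈ b, IsOpen (c i))
    (hsb : s = ⋃ i ∈ b, c i) : ∃ t : Finset ι, ↑t ⊆ b ∧ s = ⋃ i ∈ t, c i := by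
  obtain ⟨t, htb, ht, hst⟩ := hs.elim_finite_subcover_image hc hsb.subset
  refine ⟨ht.toFinset, by simpa using htb, ?_⟩
  simp only [Finite.mem_toFinset]
  exact hst.antisymm (hsb ▸ biUnion_mono htb fun _ _ => subset_rfl)

section Semicharacter

variable {G : Type*} [Semigroup G]

lemma continuous_semicharSpace_apply (e : {e : G // e * e = e}) :
    Continuous fun φ : SemicharSpace G => φ.1 e :=
  (continuous_apply e).comp continuous_subtype_val

lemma isClopen_setOf_semicharSpace_apply_eq_one (e : {e : G // e * e = e}) :
    IsClopen {φ : SemicharSpace G | φ.1 e = 1} := by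
  have h : {φ : SemicharSpace G | φ.1 e = 1} = {φ | φ.1 e ≠ 0} := by
    ext φ
    rcases φ.2.1 e with h | h <;> simp [h]
  refine ⟨isClosed_eq (continuous_semicharSpace_apply e) continuous_const, ?_⟩
  exact h ▸ isOpen_ne_fun (continuous_semicharSpace_apply e) continuous_const

lemma isClosed_setOf_map_mul_idempotents :
    IsClosed {φ : {e : G // e * e = e} → ℂ |
      ∀ a b ab : {e : G // e * e = e}, (ab : G) = a * b → φ ab = φ a * φ b} := by
  simp only [ofPred_forall]
  exact isClosed_iInter fun a => isClosed_iInter fun b => isClosed_iInter fun ab =>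
    isClosed_iInter fun _ => isClosed_eq (continuous_apply ab)
      ((continuous_apply a).mul (continuous_apply b))

lemma isCompact_setOf_semicharSpace_apply_eq_one (e : {e : G // e * e = e}) :
    IsCompact {φ : SemicharSpace G | φ.1 e = 1} := by
  have himage : Subtype.val '' {φ : SemicharSpace G | φ.1 e = 1} =
      (pi univ fun _ => {0, 1}) ∩ {φ | ∀ a b ab : {e : G // e * e = e},
        (ab : G) = a * b → φ ab = φ a * φ b} ∩ {φ | φ e = 1} := by
    ext φ
    constructor
    · rintro ⟨φ, hφe, rfl⟩
      exact ⟨⟨fun f _ => φ.2.1 f, φ.2.2.1⟩, hφe⟩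
    · rintro ⟨⟨h01, hmul⟩, hφe⟩
      exact ⟨⟨φ, fun f => h01 f trivial, hmul, e, hφe⟩, hφe, rfl⟩
  rw [Subtype.isCompact_iff, himage]
  exact ((isCompact_univ_pi fun _ => (toFinite _).isCompact).inter_right
    isClosed_setOf_map_mul_idempotents).inter_right
      (isClosed_eq (continuous_apply e) continuous_const)

end Semicharacter

theorem stmt16_general {G : Type*} [Semigroup G]
    (g : G) :
    (Continuous (Set.indicator
        {φ : SemicharSpace G | ∃ e : {e : G // e * e = e}, (e : G) * g = (e : G) ∧ φ.1 e = 1}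
        (fun _ => (1 : ℝ))) ∧
      Filter.Tendsto (Set.indicator
        {φ : SemicharSpace G | ∃ e : {e : G // e * e = e}, (e : G) * g = (e : G) ∧ φ.1 e = 1}
        (fun _ => (1 : ℝ))) (Filter.cocompact (SemicharSpace G)) (nhds 0))
    ↔ ∃ F : Finset {e : G // e * e = e},
        (∀ e ∈ F, (e : G) * g = (e : G)) ∧
        {φ : SemicharSpace G | ∃ e : {e : G // e * e = e}, (e : G) * g = (e : G) ∧ φ.1 e = 1}
          = ⋃ e ∈ F, {φ : SemicharSpace G | φ.1 e = 1} := by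
  have hU : {φ : SemicharSpace G | ∃ e : {e : G // e * e = e}, (e : G) * g = e ∧ φ.1 e = 1} =
      ⋃ e ∈ {e : {e : G // e * e = e} | (e : G) * g = e}, {φ | φ.1 e = 1} := by
    ext φ
    simp
  rw [continuous_indicator_one_and_tendsto_cocompact_iff]
  constructor
  · rintro ⟨-, hcompact⟩
    exact hcompact.exists_finset_eq_biUnion
      (fun e _ => (isClopen_setOf_semicharSpace_apply_eq_one e).isOpen) hU
  · rintro ⟨F, -, hF⟩
    rw [hF]
    exact ⟨F.finite_toSet.isClopen_biUnion fun e _ => isClopen_setOf_semicharSpace_apply_eq_one e,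
      F.finite_toSet.isCompact_biUnion fun e _ => isCompact_setOf_semicharSpace_apply_eq_one e⟩

/-- For fixed `g ∈ G` let
`U_g = {φ ∈ X : ∃ e ∈ E, e g = e and φ(e) = 1}` (the carrier of `⋁{1_e : e ≤ g}`). Then the
indicator function of `U_g` is continuous and vanishes at infinity (lies in `C₀(X)`) if and
only if `U_g` is a finite union `⋃_{e ∈ F} D_e` over a finite set `F ⊆ {e ∈ E : e ≤ g}`. -/
theorem stmt16 {G : Type*} [Semigroup G]
    (inv : G → G)
    (hinv1 : ∀ g, g * inv g * g = g)
    (hinv2 : ∀ g, inv g * g * inv g = inv g)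
    (hinv_unique : ∀ g i, g * i * g = g → i * g * i = i → i = inv g)
    (g : G) :
    (Continuous (Set.indicator
        {φ : SemicharSpace G | ∃ e : {e : G // e * e = e}, (e : G) * g = (e : G) ∧ φ.1 e = 1}
        (fun _ => (1 : ℝ))) ∧
      Filter.Tendsto (Set.indicator
        {φ : SemicharSpace G | ∃ e : {e : G // e * e = e}, (e : G) * g = (e : G) ∧ φ.1 e = 1}
        (fun _ => (1 : ℝ))) (Filter.cocompact (SemicharSpace G)) (nhds 0))
    ↔ ∃ F : Finset {e : G // e * e = e},
        (∀ e ∈ F, (e : G) * g = (e : G)) ∧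
        {φ : SemicharSpace G | ∃ e : {e : G // e * e = e}, (e : G) * g = (e : G) ∧ φ.1 e = 1}
          = ⋃ e ∈ F, {φ : SemicharSpace G | φ.1 e = 1} :=
  stmt16_general g
end

section
/- Let E be a semilattice (a commutative semigroup all of whose elements are idempotent) and let X be the set of semicharacters of E. Then the family of evaluation functions X → ℂ, φ ↦ φ(e), indexed by e ∈ E, is linearly independent in the complex vector space of functions X → ℂ. (This is the linear independence of the projections e ∈ E inside the commutative C*-algebra C*(E), used in the proof that the inner product of the compatible ℓ²(G)-space is definite.) -/
/-- A semicharacter of a semilattice `E`: a `{0,1}`-valued, multiplicative, not identically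
zero map `E → ℂ`. -/
def IsSemicharacterOn {E : Type*} [CommSemigroup E] (φ : E → ℂ) : Prop :=
  (∀ e, φ e = 0 ∨ φ e = 1) ∧
  (∀ e f, φ (e * f) = φ e * φ f) ∧
  (∃ e, φ e = 1)

/-!
For each `a ∈ E` the principal filter `{x | a ≤ x}` gives a semicharacter
`φₐ x = [a * x = a]`, since `a ≤ e * f ↔ a ≤ e ∧ a ≤ f` in a semilattice. The matrix
`(φₐ(b))` is unitriangular for the order of `E`: evaluating a vanishing finite combination
`∑ c_b b` at `φₐ`, for `a` maximal among the `b` with `c_b ≠ 0`, leaves only `c_a`.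
-/

open Finsupp

theorem linearIndependent_of_triangular {ι X R : Type*} [PartialOrder ι] [Ring R]
    [NoZeroDivisors R] {v : ι → X → R}
    (h : ∀ i, ∃ x, v i x ≠ 0 ∧ ∀ j, v j x ≠ 0 → i ≤ j) : LinearIndependent R v := by
  rw [linearIndependent_iff]
  intro l hl
  by_contra hl0
  obtain ⟨i, hi_mem, hi_max⟩ := Finset.exists_maximal (support_nonempty_iff.2 hl0)
  obtain ⟨x, hvi, hvx⟩ := h i
  have hsum : (linearCombination R v l) x = l i * v i x := by
    rw [linearCombination_apply, Finsupp.sum, Finset.sum_apply]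
    refine Finset.sum_eq_single_of_mem i hi_mem fun j hj hji => ?_
    by_contra hne
    have hij : i ≤ j := hvx j (right_ne_zero_of_mul (by simpa using hne))
    exact hji (le_antisymm (hi_max hj hij) hij)
  have : l i * v i x = 0 := by rw [← hsum, hl, Pi.zero_apply]
  exact mem_support_iff.1 hi_mem ((mul_eq_zero.1 this).resolve_right hvi)

section Semilattice

variable {E : Type*} [CommSemigroup E]

abbrev semilatticeOrder (hidem : ∀ e : E, e * e = e) : PartialOrder E where
  le e f := e * f = e
  le_refl := hidem
  le_trans e f g hef hfg := by rw [← hef, mul_assoc, hfg]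
  le_antisymm e f hef hfe := hef.symm.trans ((mul_comm e f).trans hfe)

theorem mul_mul_eq_left_iff (hidem : ∀ e : E, e * e = e) {a e f : E} :
    a * (e * f) = a ↔ a * e = a ∧ a * f = a := by
  refine ⟨fun h => ⟨?_, ?_⟩, fun ⟨he, hf⟩ => by rw [← mul_assoc, he, hf]⟩
  · calc a * e = a * (e * f) * e := by rw [h]
      _ = a * (e * e * f) := by rw [mul_assoc, mul_comm (e * f) e, ← mul_assoc e]
      _ = a := by rw [hidem, h]
  · calc a * f = a * (e * f) * f := by rw [h]
      _ = a * (e * (f * f)) := by rw [mul_assoc, mul_assoc]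
      _ = a := by rw [hidem, h]

open Classical in
noncomputable def principalSemicharacter (a : E) : E → ℂ := fun x => if a * x = a then 1 else 0

theorem isSemicharacterOn_principalSemicharacter (hidem : ∀ e : E, e * e = e) (a : E) :
    IsSemicharacterOn (principalSemicharacter a) := by
  classical
  refine ⟨fun e => (ite_eq_or_eq ..).symm, fun e f => ?_, a, ?_⟩
  · simp only [principalSemicharacter, mul_mul_eq_left_iff hidem, ite_zero_mul_ite_zero, one_mul]
  · simp [principalSemicharacter, hidem]

end Semilattice

/-- Let `E` be a semilattice (a commutative semigroup all of whose elements
are idempotent) and `X` its set of semicharacters. Then the evaluation functions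
`X → ℂ`, `φ ↦ φ(e)`, indexed by `e ∈ E`, are linearly independent over `ℂ`. -/
theorem stmt17 {E : Type*} [CommSemigroup E]
    (hidem : ∀ e : E, e * e = e) :
    LinearIndependent ℂ
      (fun e : E => fun φ : {φ : E → ℂ // IsSemicharacterOn φ} => φ.1 e) := by
  let := semilatticeOrder hidem
  refine linearIndependent_of_triangular fun a => ⟨⟨principalSemicharacter a,
    isSemicharacterOn_principalSemicharacter hidem a⟩, ?_, fun b hb => ?_⟩
  · simp [principalSemicharacter, hidem]
  · by_contra hab
    exact hb (if_neg hab)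
end
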